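/- arXiv:2008.06400 — 3 statements merged into one kernel-verified Lean document; each statement's English description precedes it below -/
import Mathlib

section
/- Let Y_1, …, Y_n be real numbers, not all equal, let ξ > 0, and let β < min_i Y_i. Then (∑_{i=1}^n (Y_i - β)^{-2-1/ξ})·(∑_{i=1}^n (Y_i - β)^{-1}) ≥ (∑_{i=1}^n (Y_i - β)^{-1-1/ξ})·(∑_{i=1}^n (Y_i - β)^{-2}). -/
private lemma double_sum_pair (n : ℕ) (u v : Fin n → ℝ) :
    ∑ i, ∑ j, (u i * v j + u j * v i) = (∑ i, u i) * (∑ i, v i) * 2 := by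
  simp_rw [Finset.sum_add_distrib]
  rw [← Finset.sum_mul_sum]
  have : ∑ i, ∑ j, u j * v i = ∑ j, ∑ i, u j * v i := Finset.sum_comm
  rw [this, ← Finset.sum_mul_sum]
  ring

private lemma pair_sum_le (n : ℕ) (p q r s : Fin n → ℝ)
    (h : ∀ i j, r i * s j + r j * s i ≤ p i * q j + p j * q i) :
    (∑ i, r i) * (∑ i, s i) ≤ (∑ i, p i) * (∑ i, q i) := by
  have h1 := double_sum_pair n r s
  have h2 := double_sum_pair n p q
  have hle : ∑ i, ∑ j, (r i * s j + r j * s i) ≤ ∑ i, ∑ j, (p i * q j + p j * q i) :=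
    Finset.sum_le_sum fun i _ => Finset.sum_le_sum fun j _ => h i j
  nlinarith [hle]

private lemma antitone_rpow {x y e : ℝ} (hx : 0 < x) (hxy : x ≤ y) (he : e ≤ 0) :
    y ^ e ≤ x ^ e :=
  Real.rpow_le_rpow_of_nonpos hx hxy he

private lemma ptwise {x y ξ : ℝ} (hx : 0 < x) (hy : 0 < y) (hξ : 0 < ξ) :
    x ^ (-1 - 1/ξ) * y ^ (-2 : ℝ) + y ^ (-1 - 1/ξ) * x ^ (-2 : ℝ) ≤
      x ^ (-2 - 1/ξ) * y ^ (-1 : ℝ) + y ^ (-2 - 1/ξ) * x ^ (-1 : ℝ) := by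
  set a := x ^ (-1 : ℝ) with ha'
  set b := y ^ (-1 : ℝ) with hb'
  set c := x ^ (-1/ξ) with hc'
  set d := y ^ (-1/ξ) with hd'
  have ha : 0 < a := Real.rpow_pos_of_pos hx _
  have hb : 0 < b := Real.rpow_pos_of_pos hy _
  have hx2 : x ^ (-2 : ℝ) = a * a := by
    rw [ha', ← Real.rpow_add hx]; norm_num
  have hy2 : y ^ (-2 : ℝ) = b * b := by
    rw [hb', ← Real.rpow_add hy]; norm_num
  have hx1 : x ^ (-1 - 1/ξ) = a * c := by
    rw [ha', hc', ← Real.rpow_add hx]; ring_nf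
  have hy1 : y ^ (-1 - 1/ξ) = b * d := by
    rw [hb', hd', ← Real.rpow_add hy]; ring_nf
  have hx3 : x ^ (-2 - 1/ξ) = a * a * c := by
    rw [ha', hc', ← Real.rpow_add hx, ← Real.rpow_add hx]; ring_nf
  have hy3 : y ^ (-2 - 1/ξ) = b * b * d := by
    rw [hb', hd', ← Real.rpow_add hy, ← Real.rpow_add hy]; ring_nf
  have hne : (-1 : ℝ) ≤ 0 := by norm_num
  have hneξ : -1/ξ ≤ 0 := by rw [neg_div]; simp [le_of_lt, div_pos, hξ]
  have key : 0 ≤ (a - b) * (c - d) := by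
    rcases le_total x y with hxy | hxy
    · exact mul_nonneg (sub_nonneg.2 (antitone_rpow hx hxy hne))
        (sub_nonneg.2 (antitone_rpow hx hxy hneξ))
    · nlinarith [antitone_rpow hy hxy hne, antitone_rpow hy hxy hneξ]
  rw [hx1, hy1, hx2, hy2, hx3, hy3]
  nlinarith [mul_nonneg (mul_pos ha hb).le key]

theorem seitz_power_sums (n : ℕ) (Y : Fin n → ℝ) (hne : ∃ i j, Y i ≠ Y j)
    (ξ β : ℝ) (hξ : 0 < ξ) (hβ : ∀ i, β < Y i) :
    (∑ i, (Y i - β) ^ (-2 - 1 / ξ)) * (∑ i, (Y i - β) ^ ((-1 : ℝ))) ≥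
      (∑ i, (Y i - β) ^ (-1 - 1 / ξ)) * (∑ i, (Y i - β) ^ ((-2 : ℝ))) := by
  have hx : ∀ i, 0 < Y i - β := fun i => sub_pos.2 (hβ i)
  exact pair_sum_le n _ _ _ _ (fun i j => ptwise (hx i) (hx j) hξ)
end

section
/- Let Y be a GEV-distributed random variable with parameters (τ₀, μ₀, ξ₀) where τ₀ > 0 and ξ₀ ≠ 0, and set w = 1 + ξ₀(Y - μ₀)/τ₀. Then for any real α with α·ξ₀ + 1 > 0 and any nonnegative integer b, E[w^{-α}·(log w)^b] = (-ξ₀)^b · Γ^{(b)}(α·ξ₀ + 1), where Γ^{(b)} is the b-th derivative of the Gamma function. -/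
/-!
The map `s ↦ μ₀ + τ₀ (s ^ (-ξ₀) - 1) / ξ₀` carries the standard exponential distribution to the
GEV distribution (compare CDFs), and it turns `w` into `s ^ (-ξ₀)`, so the moment is
`(-ξ₀) ^ b ∫₀^∞ s ^ (α ξ₀) (log s) ^ b e^(-s) ds`. This is the `b`-th derivative of
`Γ(t) = ∫₀^∞ s ^ (t - 1) e^(-s) ds` at `t = α ξ₀ + 1`: Mellin transforms may be differentiated
under the integral sign, each derivative contributing a factor `log s`.
-/

open MeasureTheory

/-- CDF of the generalized extreme value distribution with parameters `(τ₀, μ₀, ξ₀)`, `ξ₀ ≠ 0`. -/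
noncomputable def gevCDF (τ₀ μ₀ ξ₀ : ℝ) (y : ℝ) : ℝ :=
  if 0 < 1 + ξ₀ * (y - μ₀) / τ₀ then
    Real.exp (-(1 + ξ₀ * (y - μ₀) / τ₀) ^ (-1 / ξ₀))
  else if 0 < ξ₀ then 0 else 1

open Set Filter Asymptotics Real ProbabilityTheory
open scoped Topology

section MellinLogPow

variable {E : Type*} [NormedAddCommGroup E] [NormedSpace ℂ E] {f : ℝ → E} {a b : ℝ}

theorem isBigO_rpow_top_log_pow_smul (hf : f =O[atTop] (· ^ (-a))) (k : ℕ) {c : ℝ}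
    (hc : c < a) : (fun t : ℝ => log t ^ k • f t) =O[atTop] (· ^ (-c)) := by
  induction k generalizing c with
  | zero =>
    refine (hf.trans (IsBigO.of_bound 1 ?_)).congr_left fun t => by simp
    filter_upwards [eventually_ge_atTop 1] with t ht
    rw [one_mul, norm_of_nonneg (by positivity), norm_of_nonneg (by positivity)]
    exact rpow_le_rpow_of_exponent_le ht (by linarith)
  | succ k ih =>
    refine (isBigO_rpow_top_log_smul (show c < (c + a) / 2 by linarith)
      (ih (show (c + a) / 2 < a by linarith))).congr_left fun t => ?_
    rw [smul_smul, pow_succ']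

theorem isBigO_rpow_zero_log_pow_smul (hf : f =O[𝓝[>] 0] (· ^ (-b))) (k : ℕ) {c : ℝ}
    (hc : b < c) : (fun t : ℝ => log t ^ k • f t) =O[𝓝[>] 0] (· ^ (-c)) := by
  induction k generalizing c with
  | zero =>
    refine (hf.trans (IsBigO.of_bound 1 ?_)).congr_left fun t => by simp
    filter_upwards [Ioc_mem_nhdsGT zero_lt_one] with t ht
    rw [one_mul, norm_of_nonneg (rpow_nonneg ht.1.le _), norm_of_nonneg (rpow_nonneg ht.1.le _)]
    exact rpow_le_rpow_of_exponent_ge ht.1 ht.2 (by linarith)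
  | succ k ih =>
    refine (isBigO_rpow_zero_log_smul (show (b + c) / 2 < c by linarith)
      (ih (show b < (b + c) / 2 by linarith))).congr_left fun t => ?_
    rw [smul_smul, pow_succ']

theorem hasDerivAt_mellin_log_pow_smul (hfc : LocallyIntegrableOn f (Ioi 0))
    (hf_top : f =O[atTop] (· ^ (-a))) (hf_bot : f =O[𝓝[>] 0] (· ^ (-b))) (k : ℕ) {s : ℂ}
    (hs_top : s.re < a) (hs_bot : b < s.re) :
    HasDerivAt (mellin fun t => log t ^ k • f t) (mellin (fun t => log t ^ (k + 1) • f t) s)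
      s := by
  have hloc : LocallyIntegrableOn (fun t => log t ^ k • f t) (Ioi 0) :=
    hfc.continuousOn_smul isOpen_Ioi.isLocallyClosed
      ((continuousOn_log.mono fun _ ht => ne_of_gt ht).pow k)
  convert (mellin_hasDerivAt_of_isBigO_rpow (s := s) hloc
    (isBigO_rpow_top_log_pow_smul hf_top k (show (s.re + a) / 2 < a by linarith))
    (by linarith) (isBigO_rpow_zero_log_pow_smul hf_bot k (show b < (b + s.re) / 2 by linarith))
    (by linarith)).2 using 3 with t
  rw [smul_smul, pow_succ']

end MellinLogPow

section GammaDeriv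

theorem isBigO_exp_neg_rpow_atTop (a : ℝ) :
    (fun t : ℝ => (rexp (-t) : ℂ)) =O[atTop] (· ^ (-a)) := by
  rw [← isBigO_norm_left]
  simp_rw [Complex.norm_real, isBigO_norm_left]
  simpa only [neg_one_mul] using (isLittleO_exp_neg_mul_rpow_atTop zero_lt_one _).isBigO

theorem isBigO_exp_neg_rpow_nhdsGT_zero :
    (fun t : ℝ => (rexp (-t) : ℂ)) =O[𝓝[>] 0] (· ^ (-0 : ℝ)) := by
  simp_rw [neg_zero, rpow_zero]
  refine isBigO_const_of_tendsto (y := (1 : ℂ)) ?_ one_ne_zero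
  rw [show (1 : ℂ) = rexp (-0) by simp]
  exact (Complex.continuous_ofReal.comp (continuous_exp.comp continuous_neg)).continuousWithinAt

theorem integral_rpow_mul_log_pow_mul_exp_neg_eq_re_mellin (k : ℕ) (t : ℝ) :
    ∫ x in Ioi 0, x ^ (t - 1) * log x ^ k * rexp (-x) =
      (mellin (fun x => log x ^ k • (rexp (-x) : ℂ)) t).re := by
  rw [mellin, ← Complex.ofReal_re (∫ x in Ioi 0, _), ← integral_complex_ofReal]
  congr 1
  refine setIntegral_congr_fun measurableSet_Ioi fun x hx => ?_
  rw [← Complex.ofReal_one, ← Complex.ofReal_sub, ← Complex.ofReal_cpow (le_of_lt hx)]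
  simp only [Complex.real_smul, smul_eq_mul, Complex.ofReal_mul, Complex.ofReal_pow]
  ring

theorem hasDerivAt_integral_rpow_mul_log_pow_mul_exp_neg (k : ℕ) {t : ℝ} (ht : 0 < t) :
    HasDerivAt (fun u => ∫ x in Ioi 0, x ^ (u - 1) * log x ^ k * rexp (-x))
      (∫ x in Ioi 0, x ^ (t - 1) * log x ^ (k + 1) * rexp (-x)) t := by
  simp only [integral_rpow_mul_log_pow_mul_exp_neg_eq_re_mellin]
  refine (hasDerivAt_mellin_log_pow_smul ?_ (isBigO_exp_neg_rpow_atTop (t + 1))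
    isBigO_exp_neg_rpow_nhdsGT_zero k (by simp) (by simpa using ht)).real_of_complex
  exact (Complex.continuous_ofReal.comp (continuous_exp.comp continuous_neg)).continuousOn
    |>.locallyIntegrableOn measurableSet_Ioi

theorem iteratedDeriv_Gamma_eq_integral (k : ℕ) {t : ℝ} (ht : 0 < t) :
    iteratedDeriv k Gamma t = ∫ x in Ioi 0, x ^ (t - 1) * log x ^ k * rexp (-x) := by
  induction k generalizing t with
  | zero =>
    simp_rw [iteratedDeriv_zero, Gamma_eq_integral ht, pow_zero, mul_one, mul_comm]
  | succ k ih =>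
    have h : iteratedDeriv k Gamma =ᶠ[𝓝 t]
        fun u => ∫ x in Ioi 0, x ^ (u - 1) * log x ^ k * rexp (-x) :=
      eventually_of_mem (Ioi_mem_nhds ht) fun u hu => ih hu
    rw [iteratedDeriv_succ, h.deriv_eq,
      (hasDerivAt_integral_rpow_mul_log_pow_mul_exp_neg k ht).deriv]

end GammaDeriv

section ExpMeasure

theorem expMeasure_one_eq :
    expMeasure 1 = (volume.restrict (Ioi 0)).withDensity fun s => ENNReal.ofReal (rexp (-s)) := by
  rw [← withDensity_indicator measurableSet_Ioi, expMeasure, gammaMeasure]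
  refine withDensity_congr_ae ?_
  filter_upwards [Measure.ae_ne volume 0] with s hs
  rcases hs.lt_or_gt with hs | hs
  · simp [gammaPDF, gammaPDFReal, hs.not_ge, hs.not_gt]
  · simp [gammaPDF, gammaPDFReal, hs.le, hs]

theorem expMeasure_one_apply {A : Set ℝ} (hA : MeasurableSet A) :
    expMeasure 1 A = ∫⁻ s in A ∩ Ioi 0, ENNReal.ofReal (rexp (-s)) := by
  rw [expMeasure_one_eq, withDensity_apply _ hA, Measure.restrict_restrict hA]

theorem lintegral_exp_neg_Ioi (r : ℝ) :
    ∫⁻ s in Ioi r, ENNReal.ofReal (rexp (-s)) = ENNReal.ofReal (rexp (-r)) := by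
  rw [← ofReal_integral_eq_lintegral_ofReal (integrableOn_exp_neg_Ioi r)
    (.of_forall fun _ => (exp_pos _).le), integral_exp_neg_Ioi]

theorem lintegral_exp_neg_Ici (r : ℝ) :
    ∫⁻ s in Ici r, ENNReal.ofReal (rexp (-s)) = ENNReal.ofReal (rexp (-r)) := by
  rw [setLIntegral_congr Ioi_ae_eq_Ici.symm, lintegral_exp_neg_Ioi]

theorem integral_expMeasure_one (f : ℝ → ℝ) :
    ∫ s, f s ∂expMeasure 1 = ∫ s in Ioi 0, rexp (-s) * f s := by
  rw [expMeasure_one_eq, integral_withDensity_eq_integral_toReal_smul (by fun_prop)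
    (.of_forall fun _ => ENNReal.ofReal_lt_top)]
  simp_rw [ENNReal.toReal_ofReal (exp_pos _).le, smul_eq_mul]

end ExpMeasure

section GEVOfExp

variable {τ μ ξ : ℝ}

noncomputable def gevOfExp (τ μ ξ : ℝ) (s : ℝ) : ℝ := μ + τ * (s ^ (-ξ) - 1) / ξ

theorem measurable_gevOfExp : Measurable (gevOfExp τ μ ξ) := by
  unfold gevOfExp; fun_prop

theorem one_add_mul_gevOfExp_sub_div (hτ : τ ≠ 0) (hξ : ξ ≠ 0) (s : ℝ) :
    1 + ξ * (gevOfExp τ μ ξ s - μ) / τ = s ^ (-ξ) := by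
  rw [gevOfExp]; field_simp; ring

theorem gevOfExp_le_iff (hτ : 0 < τ) (hξ : ξ ≠ 0) (s y : ℝ) :
    gevOfExp τ μ ξ s ≤ y ↔ ξ * s ^ (-ξ) ≤ ξ * (1 + ξ * (y - μ) / τ) := by
  have key : ξ * (1 + ξ * (y - μ) / τ) - ξ * s ^ (-ξ) = ξ ^ 2 / τ * (y - gevOfExp τ μ ξ s) := by
    rw [gevOfExp]; field_simp; ring
  rw [← sub_nonneg, ← mul_nonneg_iff_of_pos_left (c := ξ ^ 2 / τ) (by positivity), ← key,
    sub_nonneg]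

theorem mul_rpow_neg_le_mul_rpow_neg_iff (hξ : ξ ≠ 0) {r s : ℝ} (hr : 0 < r) (hs : 0 < s) :
    ξ * s ^ (-ξ) ≤ ξ * r ^ (-ξ) ↔ r ≤ s := by
  rcases hξ.lt_or_gt with hξ | hξ
  · rw [mul_le_mul_left_of_neg hξ, rpow_le_rpow_iff hr.le hs.le (by linarith)]
  · rw [mul_le_mul_iff_right₀ hξ, rpow_le_rpow_iff_of_neg hs hr (by linarith)]

theorem gevOfExp_preimage_Iic_inter_Ioi (hτ : 0 < τ) (hξ : ξ ≠ 0) (y : ℝ) :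
    gevOfExp τ μ ξ ⁻¹' Iic y ∩ Ioi 0 =
      if 0 < 1 + ξ * (y - μ) / τ then Ici ((1 + ξ * (y - μ) / τ) ^ (-1 / ξ))
      else if 0 < ξ then ∅ else Ioi 0 := by
  ext s
  simp only [mem_inter_iff, mem_preimage, mem_Iic, mem_Ioi, gevOfExp_le_iff hτ hξ]
  set c := 1 + ξ * (y - μ) / τ
  split_ifs with hc hξ_pos
  · have hr : 0 < c ^ (-1 / ξ) := rpow_pos_of_pos hc _
    have hc_eq : c = (c ^ (-1 / ξ)) ^ (-ξ) := by
      rw [← rpow_mul hc.le, div_mul_eq_mul_div, neg_mul_neg, one_mul, div_self hξ, rpow_one]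
    rw [mem_Ici]
    constructor
    · rintro ⟨h, hs⟩
      rwa [hc_eq, mul_rpow_neg_le_mul_rpow_neg_iff hξ hr hs] at h
    · intro h
      have hs := hr.trans_le h
      rw [hc_eq, mul_rpow_neg_le_mul_rpow_neg_iff hξ hr hs]
      exact ⟨h, hs⟩
  · refine iff_of_false (fun ⟨h, hs⟩ => ?_) (notMem_empty s)
    nlinarith [rpow_pos_of_pos hs (-ξ)]
  · simp only [mem_Ioi, and_iff_right_iff_imp]
    intro hs
    have hξ_neg : ξ < 0 := lt_of_le_of_ne (not_lt.1 hξ_pos) hξ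
    nlinarith [rpow_pos_of_pos hs (-ξ)]

theorem expMeasure_one_map_gevOfExp_Iic (hτ : 0 < τ) (hξ : ξ ≠ 0) (y : ℝ) :
    (expMeasure 1).map (gevOfExp τ μ ξ) (Iic y) = ENNReal.ofReal (gevCDF τ μ ξ y) := by
  rw [Measure.map_apply measurable_gevOfExp measurableSet_Iic,
    expMeasure_one_apply (measurable_gevOfExp measurableSet_Iic),
    gevOfExp_preimage_Iic_inter_Ioi hτ hξ, gevCDF]
  split_ifs <;> simp [lintegral_exp_neg_Ici, lintegral_exp_neg_Ioi]

theorem map_eq_expMeasure_one_map_gevOfExp {Ω : Type*} [MeasurableSpace Ω] {P : Measure Ω}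
    [IsFiniteMeasure P] (hτ : 0 < τ) (hξ : ξ ≠ 0) {Y : Ω → ℝ} (hY : Measurable Y)
    (hcdf : ∀ y : ℝ, (P {ω | Y ω ≤ y}).toReal = gevCDF τ μ ξ y) :
    P.map Y = (expMeasure 1).map (gevOfExp τ μ ξ) := by
  have := isProbabilityMeasure_expMeasure one_pos
  refine Measure.ext_of_Iic _ _ fun y => ?_
  rw [expMeasure_one_map_gevOfExp_Iic hτ hξ, Measure.map_apply hY measurableSet_Iic, ← hcdf y,
    ENNReal.ofReal_toReal (measure_ne_top P _)]
  rfl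

end GEVOfExp

theorem gev_moment_formula {Ω : Type*} [MeasurableSpace Ω] (P : Measure Ω)
    [IsProbabilityMeasure P] (τ₀ μ₀ ξ₀ : ℝ) (hτ : 0 < τ₀) (hξ : ξ₀ ≠ 0)
    (Y : Ω → ℝ) (hY : Measurable Y)
    (hcdf : ∀ y : ℝ, (P {ω | Y ω ≤ y}).toReal = gevCDF τ₀ μ₀ ξ₀ y)
    (α : ℝ) (hα : 0 < α * ξ₀ + 1) (b : ℕ) :
    ∫ ω, (1 + ξ₀ * (Y ω - μ₀) / τ₀) ^ (-α) *
        Real.log (1 + ξ₀ * (Y ω - μ₀) / τ₀) ^ b ∂P =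
      (-ξ₀) ^ b * iteratedDeriv b Real.Gamma (α * ξ₀ + 1) := by
  set g : ℝ → ℝ := fun y =>
    (1 + ξ₀ * (y - μ₀) / τ₀) ^ (-α) * log (1 + ξ₀ * (y - μ₀) / τ₀) ^ b
  have hg : Measurable g := by fun_prop
  have hg_gevOfExp : ∀ s ∈ Ioi (0 : ℝ), rexp (-s) * g (gevOfExp τ₀ μ₀ ξ₀ s) =
      (-ξ₀) ^ b * (s ^ (α * ξ₀ + 1 - 1) * log s ^ b * rexp (-s)) := fun s hs => by
    simp only [g, one_add_mul_gevOfExp_sub_div hτ.ne' hξ, ← rpow_mul (le_of_lt hs),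
      log_rpow hs, mul_pow]
    ring_nf
  calc ∫ ω, g (Y ω) ∂P
      = ∫ y, g y ∂(expMeasure 1).map (gevOfExp τ₀ μ₀ ξ₀) := by
        rw [← map_eq_expMeasure_one_map_gevOfExp hτ hξ hY hcdf,
          integral_map hY.aemeasurable hg.aestronglyMeasurable]
    _ = ∫ s in Ioi 0, rexp (-s) * g (gevOfExp τ₀ μ₀ ξ₀ s) := by
        rw [integral_map measurable_gevOfExp.aemeasurable hg.aestronglyMeasurable,
          integral_expMeasure_one]
    _ = (-ξ₀) ^ b * iteratedDeriv b Gamma (α * ξ₀ + 1) := by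
        rw [setIntegral_congr_fun measurableSet_Ioi hg_gevOfExp, integral_const_mul,
          iteratedDeriv_Gamma_eq_integral b hα]
end

section
/- Let Y_1, Y_2, … be i.i.d. from GEV(τ₀, μ₀, ξ₀) with ξ₀ > 0, and let β₀ = μ₀ - τ₀/ξ₀. Then min_{1≤i≤n} Y_i converges almost surely to β₀, and for any γ > 0, (log n)^{(1+γ)ξ₀}·(min_{1≤i≤n} Y_i - β₀) → ∞ almost surely and (log n)^{(1-γ)ξ₀}·(min_{1≤i≤n} Y_i - β₀) → 0 almost surely. -/
open Filter MeasureTheory ProbabilityTheory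

/-!
Write `β₀ = μ₀ - τ₀ / ξ₀`, `Mₙ = min_{i ≤ n} Yᵢ` and `L = log (n + 1)`. The GEV tail gives
`P(Y ≤ β₀ + L^(-a)) = exp (-c L^(a/ξ₀))` with `c = (ξ₀/τ₀)^(-1/ξ₀)`. For `a > ξ₀` this is
`o(n⁻³)`, so the union bound makes `P(Mₙ ≤ β₀ + L^(-a))` summable; for `a < ξ₀` it is at least
`n^(-1/2)`, so by independence `P(Mₙ > β₀ + L^(-a)) ≤ exp (-n P(Y ≤ β₀ + L^(-a)))` is summable.
By Borel–Cantelli, almost surely `L^(-a) < Mₙ - β₀` eventually when `a > ξ₀`, and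
`Mₙ - β₀ ≤ L^(-a)` eventually when `a < ξ₀`. Taking `a` strictly between `ξ₀` and the exponent
`(1 ± γ) ξ₀` gives both rates, and the exponent `0` gives `Mₙ → β₀`.
-/

open Real Topology

section GEV

variable {τ₀ μ₀ ξ₀ : ℝ}

lemma one_add_mul_sub_div_eq (hτ : τ₀ ≠ 0) (hξ : ξ₀ ≠ 0) (y : ℝ) :
    1 + ξ₀ * (y - μ₀) / τ₀ = ξ₀ * (y - (μ₀ - τ₀ / ξ₀)) / τ₀ := by
  field_simp
  ring

lemma gevCDF_eq_zero_of_le (hτ : 0 < τ₀) (hξ : 0 < ξ₀) {y : ℝ} (hy : y ≤ μ₀ - τ₀ / ξ₀) :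
    gevCDF τ₀ μ₀ ξ₀ y = 0 := by
  rw [gevCDF, one_add_mul_sub_div_eq hτ.ne' hξ.ne', if_neg, if_pos hξ]
  exact not_lt.2 (div_nonpos_of_nonpos_of_nonneg
    (mul_nonpos_of_nonneg_of_nonpos hξ.le (sub_nonpos.2 hy)) hτ.le)

lemma gevCDF_add (hτ : 0 < τ₀) (hξ : 0 < ξ₀) {t : ℝ} (ht : 0 < t) :
    gevCDF τ₀ μ₀ ξ₀ (μ₀ - τ₀ / ξ₀ + t) = exp (-(ξ₀ * t / τ₀) ^ (-1 / ξ₀)) := by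
  rw [gevCDF, one_add_mul_sub_div_eq hτ.ne' hξ.ne', add_sub_cancel_left, if_pos (by positivity)]

lemma gevCDF_add_rpow_neg (hτ : 0 < τ₀) (hξ : 0 < ξ₀) {x : ℝ} (hx : 0 < x) (a : ℝ) :
    gevCDF τ₀ μ₀ ξ₀ (μ₀ - τ₀ / ξ₀ + x ^ (-a)) =
      exp (-((ξ₀ / τ₀) ^ (-1 / ξ₀) * x ^ (a / ξ₀))) := by
  rw [gevCDF_add hτ hξ (rpow_pos_of_pos hx _), mul_div_right_comm,
    mul_rpow (by positivity) (rpow_nonneg hx.le _), ← rpow_mul hx.le]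
  congr 4
  ring

end GEV

lemma eventually_mul_le_mul_rpow {c p : ℝ} (hc : 0 < c) (hp : 1 < p) (k : ℝ) :
    ∀ᶠ x in atTop, k * x ≤ c * x ^ p := by
  have h := ((tendsto_rpow_atTop (sub_pos.2 hp)).const_mul_atTop hc).eventually_ge_atTop k
  filter_upwards [h, eventually_gt_atTop 0] with x hk hx
  calc k * x ≤ c * x ^ (p - 1) * x := by gcongr
    _ = c * x ^ p := by rw [mul_assoc, ← rpow_add_one hx.ne', sub_add_cancel]

lemma eventually_mul_rpow_le_mul {c p : ℝ} (hp : p < 1) {k : ℝ} (hk : 0 < k) :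
    ∀ᶠ x in atTop, c * x ^ p ≤ k * x := by
  have h0 : Tendsto (fun x : ℝ => c * x ^ (p - 1)) atTop (𝓝 0) := by
    simpa using ((tendsto_rpow_neg_atTop (sub_pos.2 hp)).const_mul c)
  filter_upwards [h0.eventually (gt_mem_nhds hk), eventually_gt_atTop 0] with x hk hx
  calc c * x ^ p = c * x ^ (p - 1) * x := by
        rw [mul_assoc, ← rpow_add_one hx.ne', sub_add_cancel]
    _ ≤ k * x := by gcongr

lemma tendsto_log_natCast_add_one_atTop :
    Tendsto (fun n : ℕ => log ((n : ℝ) + 1)) atTop atTop :=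
  tendsto_log_atTop.comp (tendsto_atTop_add_const_right _ 1 tendsto_natCast_atTop_atTop)

lemma natCast_add_one_rpow_neg_two (n : ℕ) :
    ((n : ℝ) + 1) ^ (-2 : ℝ) = exp (-(2 * log ((n : ℝ) + 1))) := by
  rw [rpow_def_of_pos (by positivity)]
  ring_nf

lemma summable_natCast_add_one_rpow_neg_two :
    Summable fun n : ℕ => ((n : ℝ) + 1) ^ (-2 : ℝ) := by
  simpa using (summable_nat_add_iff 1).2 (summable_nat_rpow.2 (by norm_num : (-2 : ℝ) < -1))

lemma eventually_natCast_add_one_mul_exp_neg_le {c p : ℝ} (hc : 0 < c) (hp : 1 < p) :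
    ∀ᶠ n : ℕ in atTop,
      ((n : ℝ) + 1) * exp (-(c * log ((n : ℝ) + 1) ^ p)) ≤ ((n : ℝ) + 1) ^ (-2 : ℝ) := by
  filter_upwards [tendsto_log_natCast_add_one_atTop.eventually
    (eventually_mul_le_mul_rpow hc hp 3)] with n hn
  rw [natCast_add_one_rpow_neg_two]
  nth_rw 1 [← exp_log (by positivity : (0 : ℝ) < n + 1)]
  rw [← exp_add]
  exact exp_le_exp.2 (by linarith)

lemma eventually_one_sub_exp_neg_pow_le {c p : ℝ} (hc : 0 ≤ c) (hp : p < 1) :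
    ∀ᶠ n : ℕ in atTop,
      (1 - exp (-(c * log ((n : ℝ) + 1) ^ p))) ^ (n + 1) ≤ ((n : ℝ) + 1) ^ (-2 : ℝ) := by
  have hL := tendsto_log_natCast_add_one_atTop
  filter_upwards [hL.eventually (eventually_mul_rpow_le_mul (c := c) hp one_half_pos),
    hL.eventually_ge_atTop 12] with n hsmall hbig
  set L := log ((n : ℝ) + 1)
  set q := exp (-(c * L ^ p))
  have hq : 2 * L ≤ (n + 1) * q := by
    calc 2 * L ≤ exp (L / 2) := by nlinarith [quadratic_le_exp_of_nonneg (x := L / 2) (by linarith)]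
      _ ≤ exp (L - c * L ^ p) := exp_le_exp.2 (by linarith)
      _ = (n + 1) * q := by rw [sub_eq_add_neg, exp_add, exp_log (by positivity)]
  have hq1 : q ≤ 1 := exp_le_one_iff.2 (neg_nonpos.2 (by positivity))
  calc (1 - q) ^ (n + 1) ≤ exp (-q) ^ (n + 1) :=
        pow_le_pow_left₀ (sub_nonneg.2 hq1) (one_sub_le_exp_neg q) _
    _ = exp (-((n + 1) * q)) := by rw [← exp_nat_mul]; push_cast; ring_nf
    _ ≤ ((n : ℝ) + 1) ^ (-2 : ℝ) := by
        rw [natCast_add_one_rpow_neg_two]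
        exact exp_le_exp.2 (by linarith)

section RunningMin

variable {Ω : Type*}

def runningMin (Y : ℕ → Ω → ℝ) (n : ℕ) (ω : Ω) : ℝ :=
  (Finset.range (n + 1)).inf' Finset.nonempty_range_add_one fun i => Y i ω

lemma runningMin_le_iff {Y : ℕ → Ω → ℝ} {n : ℕ} {ω : Ω} {x : ℝ} :
    runningMin Y n ω ≤ x ↔ ∃ i ∈ Finset.range (n + 1), Y i ω ≤ x :=
  Finset.inf'_le_iff _

lemma lt_runningMin_iff {Y : ℕ → Ω → ℝ} {n : ℕ} {ω : Ω} {x : ℝ} :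
    x < runningMin Y n ω ↔ ∀ i ∈ Finset.range (n + 1), x < Y i ω :=
  Finset.lt_inf'_iff _

variable [MeasurableSpace Ω] {P : Measure Ω}

lemma measureReal_runningMin_le_le [IsFiniteMeasure P] {Y : ℕ → Ω → ℝ} {x p : ℝ}
    (hY : ∀ i, P.real {ω | Y i ω ≤ x} = p) (n : ℕ) :
    P.real {ω | runningMin Y n ω ≤ x} ≤ (n + 1) * p := by
  have hset : {ω | runningMin Y n ω ≤ x} = ⋃ i ∈ Finset.range (n + 1), {ω | Y i ω ≤ x} := by
    ext ω; simp [runningMin_le_iff]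
  calc P.real {ω | runningMin Y n ω ≤ x}
      ≤ ∑ i ∈ Finset.range (n + 1), P.real {ω | Y i ω ≤ x} :=
        hset ▸ measureReal_biUnion_finset_le _ _
    _ = (n + 1) * p := by simp [hY]

lemma measureReal_lt_runningMin [IsProbabilityMeasure P] {Y : ℕ → Ω → ℝ}
    (hmeas : ∀ i, Measurable (Y i)) (hindep : iIndepFun Y P) {x p : ℝ}
    (hY : ∀ i, P.real {ω | Y i ω ≤ x} = p) (n : ℕ) :
    P.real {ω | x < runningMin Y n ω} = (1 - p) ^ (n + 1) := by
  have hset : {ω | x < runningMin Y n ω} = ⋂ i ∈ Finset.range (n + 1), Y i ⁻¹' Set.Ioi x := by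
    ext ω; simp [lt_runningMin_iff]
  have hYgt : ∀ i, P.real (Y i ⁻¹' Set.Ioi x) = 1 - p := fun i => by
    have hcompl : Y i ⁻¹' Set.Ioi x = {ω | Y i ω ≤ x}ᶜ := by ext ω; simp
    rw [hcompl, probReal_compl_eq_one_sub (s := {ω | Y i ω ≤ x}) (hmeas i measurableSet_Iic), hY i]
  rw [hset, measureReal_def, hindep.meas_biInter fun i _ => ⟨Set.Ioi x, measurableSet_Ioi, rfl⟩,
    ENNReal.toReal_prod]
  simp [← measureReal_def, hYgt]

lemma ae_eventually_notMem_of_measureReal_le [IsFiniteMeasure P] {s : ℕ → Set Ω} {g : ℕ → ℝ}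
    (hg : Summable g) (hs : ∀ᶠ n in atTop, P.real (s n) ≤ g n) :
    ∀ᵐ ω ∂P, ∀ᶠ n in atTop, ω ∉ s n := by
  have hsum : Summable fun n => P.real (s n) :=
    hg.of_norm_bounded_eventually_nat <| hs.mono fun n hn => by
      rwa [Real.norm_of_nonneg measureReal_nonneg]
  apply ae_eventually_notMem
  rw [tsum_congr fun n => (ofReal_measureReal (s := s n)).symm,
    ← ENNReal.ofReal_tsum_of_nonneg (fun _ => measureReal_nonneg) hsum]
  exact ENNReal.ofReal_ne_top

end RunningMin

section GEVMin

variable {Ω : Type*} [MeasurableSpace Ω] {P : Measure Ω} [IsProbabilityMeasure P]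
  {τ₀ μ₀ ξ₀ : ℝ} {Y : ℕ → Ω → ℝ}

lemma ae_lt_runningMin_of_gevCDF (hτ : 0 < τ₀) (hξ : 0 < ξ₀)
    (hcdf : ∀ i, ∀ y : ℝ, (P {ω | Y i ω ≤ y}).toReal = gevCDF τ₀ μ₀ ξ₀ y) :
    ∀ᵐ ω ∂P, ∀ n, μ₀ - τ₀ / ξ₀ < runningMin Y n ω := by
  have hY : ∀ᵐ ω ∂P, ∀ i, μ₀ - τ₀ / ξ₀ < Y i ω := ae_all_iff.2 fun i => by
    have h0 := hcdf i (μ₀ - τ₀ / ξ₀)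
    rw [gevCDF_eq_zero_of_le hτ hξ le_rfl] at h0
    simpa [ae_iff] using (measureReal_eq_zero_iff (measure_ne_top _ _)).1 h0
  filter_upwards [hY] with ω hω n
  exact lt_runningMin_iff.2 fun i _ => hω i

lemma ae_eventually_add_rpow_neg_lt_runningMin_of_gevCDF (hτ : 0 < τ₀) (hξ : 0 < ξ₀)
    (hcdf : ∀ i, ∀ y : ℝ, (P {ω | Y i ω ≤ y}).toReal = gevCDF τ₀ μ₀ ξ₀ y) {a : ℝ}
    (ha : ξ₀ < a) :
    ∀ᵐ ω ∂P, ∀ᶠ n : ℕ in atTop,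
      μ₀ - τ₀ / ξ₀ + log ((n : ℝ) + 1) ^ (-a) < runningMin Y n ω := by
  have hbound : ∀ᶠ n : ℕ in atTop,
      P.real {ω | runningMin Y n ω ≤ μ₀ - τ₀ / ξ₀ + log ((n : ℝ) + 1) ^ (-a)} ≤
        ((n : ℝ) + 1) ^ (-2 : ℝ) := by
    filter_upwards [eventually_natCast_add_one_mul_exp_neg_le (c := (ξ₀ / τ₀) ^ (-1 / ξ₀))
      (by positivity) ((one_lt_div hξ).2 ha),
      tendsto_log_natCast_add_one_atTop.eventually_gt_atTop 0] with n hn hL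
    refine (measureReal_runningMin_le_le (fun i => hcdf i _) n).trans ?_
    rwa [gevCDF_add_rpow_neg hτ hξ hL]
  filter_upwards [ae_eventually_notMem_of_measureReal_le
    summable_natCast_add_one_rpow_neg_two hbound] with ω hω
  filter_upwards [hω] with n hn
  simpa using hn

lemma ae_eventually_runningMin_le_add_rpow_neg_of_gevCDF (hτ : 0 < τ₀) (hξ : 0 < ξ₀)
    (hmeas : ∀ i, Measurable (Y i)) (hindep : iIndepFun Y P)
    (hcdf : ∀ i, ∀ y : ℝ, (P {ω | Y i ω ≤ y}).toReal = gevCDF τ₀ μ₀ ξ₀ y) {a : ℝ}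
    (ha : a < ξ₀) :
    ∀ᵐ ω ∂P, ∀ᶠ n : ℕ in atTop,
      runningMin Y n ω ≤ μ₀ - τ₀ / ξ₀ + log ((n : ℝ) + 1) ^ (-a) := by
  have hbound : ∀ᶠ n : ℕ in atTop,
      P.real {ω | μ₀ - τ₀ / ξ₀ + log ((n : ℝ) + 1) ^ (-a) < runningMin Y n ω} ≤
        ((n : ℝ) + 1) ^ (-2 : ℝ) := by
    filter_upwards [eventually_one_sub_exp_neg_pow_le (c := (ξ₀ / τ₀) ^ (-1 / ξ₀))
      (by positivity) ((div_lt_one hξ).2 ha),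
      tendsto_log_natCast_add_one_atTop.eventually_gt_atTop 0] with n hn hL
    rwa [measureReal_lt_runningMin hmeas hindep (fun i => hcdf i _) n,
      gevCDF_add_rpow_neg hτ hξ hL]
  filter_upwards [ae_eventually_notMem_of_measureReal_le
    summable_natCast_add_one_rpow_neg_two hbound] with ω hω
  filter_upwards [hω] with n hn
  simpa using hn

lemma tendsto_rpow_log_mul_runningMin_sub_atTop (hτ : 0 < τ₀) (hξ : 0 < ξ₀)
    (hcdf : ∀ i, ∀ y : ℝ, (P {ω | Y i ω ≤ y}).toReal = gevCDF τ₀ μ₀ ξ₀ y) {a : ℝ}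
    (ha : ξ₀ < a) :
    ∀ᵐ ω ∂P, Tendsto (fun n : ℕ => log ((n : ℝ) + 1) ^ a * (runningMin Y n ω - (μ₀ - τ₀ / ξ₀)))
      atTop atTop := by
  obtain ⟨b, hξb, hba⟩ := exists_between ha
  have hL := tendsto_log_natCast_add_one_atTop
  filter_upwards [ae_eventually_add_rpow_neg_lt_runningMin_of_gevCDF hτ hξ hcdf
    (a := b) hξb] with ω hω
  refine tendsto_atTop_mono' atTop ?_ ((tendsto_rpow_atTop (sub_pos.2 hba)).comp hL)
  filter_upwards [hω, hL.eventually_gt_atTop 0] with n hn hpos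
  calc log ((n : ℝ) + 1) ^ (a - b) = log ((n : ℝ) + 1) ^ a * log ((n : ℝ) + 1) ^ (-b) := by
        rw [sub_eq_add_neg, rpow_add hpos]
    _ ≤ log ((n : ℝ) + 1) ^ a * (runningMin Y n ω - (μ₀ - τ₀ / ξ₀)) := by
        gcongr
        linarith

lemma tendsto_rpow_log_mul_runningMin_sub_zero (hτ : 0 < τ₀) (hξ : 0 < ξ₀)
    (hmeas : ∀ i, Measurable (Y i)) (hindep : iIndepFun Y P)
    (hcdf : ∀ i, ∀ y : ℝ, (P {ω | Y i ω ≤ y}).toReal = gevCDF τ₀ μ₀ ξ₀ y) {a : ℝ}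
    (ha : a < ξ₀) :
    ∀ᵐ ω ∂P, Tendsto (fun n : ℕ => log ((n : ℝ) + 1) ^ a * (runningMin Y n ω - (μ₀ - τ₀ / ξ₀)))
      atTop (𝓝 0) := by
  obtain ⟨b, hab, hbξ⟩ := exists_between ha
  have hL := tendsto_log_natCast_add_one_atTop
  filter_upwards [ae_eventually_runningMin_le_add_rpow_neg_of_gevCDF hτ hξ hmeas hindep hcdf
    (a := b) hbξ, ae_lt_runningMin_of_gevCDF hτ hξ hcdf] with ω hω hgt
  refine squeeze_zero' ?_ ?_ ((tendsto_rpow_neg_atTop (sub_pos.2 hab)).comp hL)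
  · filter_upwards [hL.eventually_gt_atTop 0] with n hpos
    exact mul_nonneg (rpow_nonneg hpos.le _) (sub_nonneg.2 (hgt n).le)
  · filter_upwards [hω, hL.eventually_gt_atTop 0] with n hn hpos
    calc log ((n : ℝ) + 1) ^ a * (runningMin Y n ω - (μ₀ - τ₀ / ξ₀))
        ≤ log ((n : ℝ) + 1) ^ a * log ((n : ℝ) + 1) ^ (-b) := by
          gcongr
          linarith
      _ = log ((n : ℝ) + 1) ^ (-(b - a)) := by
          rw [← rpow_add hpos]
          ring_nf

end GEVMin

theorem gev_min_convergence_rates {Ω : Type*} [MeasurableSpace Ω] (P : Measure Ω)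
    [IsProbabilityMeasure P] (τ₀ μ₀ ξ₀ : ℝ) (hτ : 0 < τ₀) (hξ : 0 < ξ₀)
    (Y : ℕ → Ω → ℝ) (hmeas : ∀ i, Measurable (Y i))
    (hindep : iIndepFun Y P)
    (hcdf : ∀ i, ∀ y : ℝ, (P {ω | Y i ω ≤ y}).toReal = gevCDF τ₀ μ₀ ξ₀ y) :
    (∀ᵐ ω ∂P, Tendsto
        (fun n : ℕ => (Finset.range (n + 1)).inf' Finset.nonempty_range_add_one
          fun i => Y i ω) atTop (nhds (μ₀ - τ₀ / ξ₀))) ∧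
    ∀ γ : ℝ, 0 < γ →
      (∀ᵐ ω ∂P, Tendsto
          (fun n : ℕ => Real.log ((n : ℝ) + 1) ^ ((1 + γ) * ξ₀) *
            (((Finset.range (n + 1)).inf' Finset.nonempty_range_add_one fun i => Y i ω) -
              (μ₀ - τ₀ / ξ₀))) atTop atTop) ∧
      (∀ᵐ ω ∂P, Tendsto
          (fun n : ℕ => Real.log ((n : ℝ) + 1) ^ ((1 - γ) * ξ₀) *
            (((Finset.range (n + 1)).inf' Finset.nonempty_range_add_one fun i => Y i ω) -
              (μ₀ - τ₀ / ξ₀))) atTop (nhds 0)) := by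
  refine ⟨?_, fun γ hγ => ⟨?_, ?_⟩⟩
  · filter_upwards [tendsto_rpow_log_mul_runningMin_sub_zero hτ hξ hmeas hindep hcdf
      (a := 0) hξ] with ω hω
    simpa [runningMin, tendsto_sub_nhds_zero_iff] using hω
  · exact tendsto_rpow_log_mul_runningMin_sub_atTop hτ hξ hcdf (by nlinarith)
  · exact tendsto_rpow_log_mul_runningMin_sub_zero hτ hξ hmeas hindep hcdf (by nlinarith)
end
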